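/- Let (C, C₋, C₊) be a Reedy category, let Γ be any one of the categories ∫N(C), ∫N^{-,+}(C), ∫N^{--,+}_+(C), Down_*(C), Down(C), and let last : Γ → C be the associated last-component functor. Then for all categories D, all functors F, G : C → D, and every natural transformation ε : F ∘ last ⇒ G ∘ last, there exists a unique natural transformation ε̃ : F ⇒ G with ε̃ ▷ last = ε (whiskering of ε̃ with last). -/

import Mathlib

namespace ReedyPaper

open CategoryTheory

universe v₂ u₂ v₁ u₁ v u

variable {C : Type u} [Category.{v} C]

def IsIdMor {x y : C} (f : x ⟶ y) : Prop := ∃ h : x = y, f = eqToHom h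

structure ReedyStruct (C : Type u) [Category.{v} C] where
  neg : MorphismProperty C
  pos : MorphismProperty C
  neg_id : ∀ x : C, neg (𝟙 x)
  pos_id : ∀ x : C, pos (𝟙 x)
  neg_comp : ∀ {x y z : C} (f : x ⟶ y) (g : y ⟶ z), neg f → neg g → neg (f ≫ g)
  pos_comp : ∀ {x y z : C} (f : x ⟶ y) (g : y ⟶ z), pos f → pos g → pos (f ≫ g)
  factor_existsUnique : ∀ {x y : C} (f : x ⟶ y),
    ∃! t : Σ z : C, (x ⟶ z) × (z ⟶ y), neg t.2.1 ∧ pos t.2.2 ∧ t.2.1 ≫ t.2.2 = f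
  wf : WellFounded (fun x y : C =>
    (∃ f : x ⟶ y, pos f ∧ ¬ IsIdMor f) ∨ (∃ f : y ⟶ x, neg f ∧ ¬ IsIdMor f))

structure ChainObj (C : Type u) [Category.{v} C] where
  n : ℕ
  X : Fin (n + 1) ⥤ C

structure ChainHom (P Q : ChainObj C) where
  α : Fin (P.n + 1) →o Fin (Q.n + 1)
  θ : ∀ i : Fin (P.n + 1), P.X.obj i ⟶ Q.X.obj (α i)
  natural : ∀ {i j : Fin (P.n + 1)} (h : i ≤ j),
    P.X.map (homOfLE h) ≫ θ j = θ i ≫ Q.X.map (homOfLE (α.monotone h))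

theorem ChainHom.ext' {P Q : ChainObj C} {f g : ChainHom P Q}
    (hα : f.α = g.α) (hθ : HEq f.θ g.θ) : f = g := by
  cases f; cases g; cases hα; cases hθ; rfl

def ChainHom.id (P : ChainObj C) : ChainHom P P where
  α := OrderHom.id
  θ i := 𝟙 _
  natural h := by
    change P.X.map (homOfLE h) ≫ 𝟙 _ = 𝟙 _ ≫ P.X.map (homOfLE h)
    simp

def ChainHom.comp {P Q S : ChainObj C} (f : ChainHom P Q) (g : ChainHom Q S) :
    ChainHom P S where
  α := g.α.comp f.α
  θ i := f.θ i ≫ g.θ (f.α i)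
  natural {i j} h := by
    show P.X.map (homOfLE h) ≫ f.θ j ≫ g.θ (f.α j) =
      (f.θ i ≫ g.θ (f.α i)) ≫ S.X.map (homOfLE (g.α.monotone (f.α.monotone h)))
    rw [← Category.assoc, f.natural h, Category.assoc, g.natural (f.α.monotone h),
      ← Category.assoc]

instance : Category (ChainObj C) where
  Hom := ChainHom
  id := ChainHom.id
  comp := ChainHom.comp
  id_comp f := ChainHom.ext' rfl (heq_of_eq (funext fun i => Category.id_comp _))
  comp_id f := ChainHom.ext' rfl (heq_of_eq (funext fun i => Category.comp_id _))
  assoc f g h := ChainHom.ext' rfl (heq_of_eq (funext fun i => Category.assoc _ _ _))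

/-- The partial order on the hom-sets of `∫N(C)` (and of `∫N^{-,+}(C)`):
`(α, θ) ≤ (α', θ')` iff `α ≤ α'` pointwise and `θ'ᵢ = Y(α(i) ≤ α'(i)) ∘ θᵢ` for all `i`. -/
def ChainHom.le {P Q : ChainObj C} (f g : ChainHom P Q) : Prop :=
  (∀ i, f.α i ≤ g.α i) ∧
    ∀ (i : Fin (P.n + 1)) (h : f.α i ≤ g.α i), g.θ i = f.θ i ≫ Q.X.map (homOfLE h)

theorem ChainHom.le_comp_right {P Q S : ChainObj C} {f f' : P ⟶ Q} (g : Q ⟶ S)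
    (h : ChainHom.le f f') : ChainHom.le (f ≫ g) (f' ≫ g) := by
  refine ⟨fun i => g.α.monotone (h.1 i), fun i hi => ?_⟩
  show f'.θ i ≫ g.θ (f'.α i) = (f.θ i ≫ g.θ (f.α i)) ≫ S.X.map (homOfLE hi)
  rw [h.2 i (h.1 i), Category.assoc, g.natural (h.1 i), ← Category.assoc]
  rfl

theorem ChainHom.le_comp_left {P Q S : ChainObj C} (f : P ⟶ Q) {g g' : Q ⟶ S}
    (h : ChainHom.le g g') : ChainHom.le (f ≫ g) (f ≫ g') := by
  refine ⟨fun i => h.1 (f.α i), fun i hi => ?_⟩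
  show f.θ i ≫ g'.θ (f.α i) = (f.θ i ≫ g.θ (f.α i)) ≫ S.X.map (homOfLE hi)
  rw [h.2 (f.α i) (h.1 (f.α i)), ← Category.assoc]
  rfl

/-- Objects of `∫N^{-,+}(C)`: chains all of whose morphisms lie in `C₋`. -/
structure NegObj (R : ReedyStruct C) where
  n : ℕ
  X : Fin (n + 1) ⥤ C
  negMap : ∀ {i j : Fin (n + 1)} (h : i ≤ j), R.neg (X.map (homOfLE h))

variable {R : ReedyStruct C}

/-- The underlying object of `∫N(C)`. -/
def NegObj.chain (P : NegObj R) : ChainObj C := ⟨P.n, P.X⟩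

/-- Morphisms of `∫N^{-,+}(C)`: morphisms of `∫N(C)` all of whose components lie in `C₊`. -/
def NegHomT (P Q : NegObj R) : Type v :=
  { f : P.chain ⟶ Q.chain // ∀ i, R.pos (f.θ i) }

def NegHomT.id (P : NegObj R) : NegHomT P P := ⟨𝟙 P.chain, fun _ => R.pos_id _⟩

def NegHomT.comp {P Q S : NegObj R} (f : NegHomT P Q) (g : NegHomT Q S) : NegHomT P S :=
  ⟨f.1 ≫ g.1, fun i => by
    show R.pos (f.1.θ i ≫ g.1.θ (f.1.α i))
    exact R.pos_comp _ _ (f.2 i) (g.2 _)⟩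

theorem NegHomT.id_comp {P Q : NegObj R} (f : NegHomT P Q) : (NegHomT.id P).comp f = f := by
  apply Subtype.ext
  show 𝟙 P.chain ≫ f.1 = f.1
  exact Category.id_comp f.1

theorem NegHomT.comp_id {P Q : NegObj R} (f : NegHomT P Q) : f.comp (NegHomT.id Q) = f := by
  apply Subtype.ext
  show f.1 ≫ 𝟙 Q.chain = f.1
  exact Category.comp_id f.1

theorem NegHomT.comp_assoc {P Q S T : NegObj R} (f : NegHomT P Q) (g : NegHomT Q S)
    (h : NegHomT S T) : (f.comp g).comp h = f.comp (g.comp h) := by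
  apply Subtype.ext
  show (f.1 ≫ g.1) ≫ h.1 = f.1 ≫ (g.1 ≫ h.1)
  exact Category.assoc f.1 g.1 h.1

/-- The category `∫N^{-,+}(C)`. -/
instance : Category (NegObj R) where
  Hom := NegHomT
  id := NegHomT.id
  comp := NegHomT.comp
  id_comp := NegHomT.id_comp
  comp_id := NegHomT.comp_id
  assoc := NegHomT.comp_assoc

/-- The order on the hom-sets of `∫N^{-,+}(C)`. -/
def NegHom.le {P Q : NegObj R} (f g : P ⟶ Q) : Prop := ChainHom.le f.1 g.1

/-- The equivalence relation `∼` on the hom-sets of `∫N^{-,+}(C)`: the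
symmetric-transitive closure of `≤`. -/
def NegHom.equiv {P Q : NegObj R} (f g : P ⟶ Q) : Prop :=
  Relation.EqvGen (fun a b : P ⟶ Q => NegHom.le a b) f g

theorem NegHom.le_comp_right {P Q S : NegObj R} {f f' : P ⟶ Q} (g : Q ⟶ S)
    (h : NegHom.le f f') : NegHom.le (f ≫ g) (f' ≫ g) :=
  ChainHom.le_comp_right g.1 h

theorem NegHom.le_comp_left {P Q S : NegObj R} (f : P ⟶ Q) {g g' : Q ⟶ S}
    (h : NegHom.le g g') : NegHom.le (f ≫ g) (f ≫ g') :=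
  ChainHom.le_comp_left f.1 h

/-- Identity-reflectingness of a chain. -/
def NegObj.IdRefl (P : NegObj R) : Prop :=
  ∀ {i j : Fin (P.n + 1)} (h : i ≤ j), IsIdMor (P.X.map (homOfLE h)) → i = j

/-- Objects of `∫N^{--,+}_+(C)`: identity-reflecting chains in `C₋`. -/
structure StrictObj (R : ReedyStruct C) where
  toNegObj : NegObj R
  idRefl : toNegObj.IdRefl

/-- Morphisms of `∫N^{--,+}_+(C)`: morphisms of `∫N^{-,+}(C)` with `α` injective. -/
def StrictHomT (P Q : StrictObj R) : Type v :=
  { f : P.toNegObj ⟶ Q.toNegObj // Function.Injective f.1.α }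

def StrictHomT.id (P : StrictObj R) : StrictHomT P P :=
  ⟨𝟙 P.toNegObj, fun _ _ h => h⟩

def StrictHomT.comp {P Q S : StrictObj R} (f : StrictHomT P Q) (g : StrictHomT Q S) :
    StrictHomT P S :=
  ⟨f.1 ≫ g.1, fun _ _ h => f.2 (g.2 h)⟩

/-- The category `∫N^{--,+}_+(C)`. -/
instance : Category (StrictObj R) where
  Hom := StrictHomT
  id := StrictHomT.id
  comp := StrictHomT.comp
  id_comp f := Subtype.ext (Category.id_comp f.1)
  comp_id f := Subtype.ext (Category.comp_id f.1)
  assoc f g h := Subtype.ext (Category.assoc f.1 g.1 h.1)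

/-- The order on the hom-sets of `∫N^{--,+}_+(C)`. -/
def StrictHom.le {P Q : StrictObj R} (f g : P ⟶ Q) : Prop := NegHom.le f.1 g.1

/-- The equivalence relation `∼` on the hom-sets of `∫N^{--,+}_+(C)`. -/
def StrictHom.equiv {P Q : StrictObj R} (f g : P ⟶ Q) : Prop :=
  Relation.EqvGen (fun a b : P ⟶ Q => StrictHom.le a b) f g

theorem StrictHom.le_comp_right {P Q S : StrictObj R} {f f' : P ⟶ Q} (g : Q ⟶ S)
    (h : StrictHom.le f f') : StrictHom.le (f ≫ g) (f' ≫ g) :=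
  NegHom.le_comp_right g.1 h

theorem StrictHom.le_comp_left {P Q S : StrictObj R} (f : P ⟶ Q) {g g' : Q ⟶ S}
    (h : StrictHom.le g g') : StrictHom.le (f ≫ g) (f ≫ g') :=
  NegHom.le_comp_left f.1 h

/-- Objects of `Down_*(C)`: the same as those of `∫N^{-,+}(C)`. -/
structure DownStar (R : ReedyStruct C) where
  obj : NegObj R

/-- The category `Down_*(C)`: hom-sets are the quotients of those of `∫N^{-,+}(C)`
by the symmetric-transitive closure of `≤`. -/
instance : Category (DownStar R) where
  Hom P Q := Quot (fun f g : P.obj ⟶ Q.obj => NegHom.le f g)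
  id P := Quot.mk _ (𝟙 P.obj)
  comp {P Q S} f g :=
    Quot.lift
      (fun f' => Quot.lift (fun g' => Quot.mk _ (f' ≫ g'))
        (fun _ _ hg => Quot.sound (NegHom.le_comp_left f' hg)) g)
      (fun f₁ f₂ hf => Quot.inductionOn g (fun g' =>
        Quot.sound (NegHom.le_comp_right g' hf))) f
  id_comp f := Quot.inductionOn f fun f' => congrArg (Quot.mk _) (Category.id_comp f')
  comp_id f := Quot.inductionOn f fun f' => congrArg (Quot.mk _) (Category.comp_id f')
  assoc f g h :=
    Quot.inductionOn f fun f' => Quot.inductionOn g fun g' => Quot.inductionOn h fun h' =>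
      congrArg (Quot.mk _) (Category.assoc f' g' h')

/-- Objects of `Down(C)`: the same as those of `∫N^{--,+}_+(C)`. -/
structure Down (R : ReedyStruct C) where
  obj : StrictObj R

/-- The category `Down(C)`: hom-sets are the quotients of those of `∫N^{--,+}_+(C)`
by the symmetric-transitive closure of `≤`. -/
instance : Category (Down R) where
  Hom P Q := Quot (fun f g : P.obj ⟶ Q.obj => StrictHom.le f g)
  id P := Quot.mk _ (𝟙 P.obj)
  comp {P Q S} f g :=
    Quot.lift
      (fun f' => Quot.lift (fun g' => Quot.mk _ (f' ≫ g'))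
        (fun _ _ hg => Quot.sound (StrictHom.le_comp_left f' hg)) g)
      (fun f₁ f₂ hf => Quot.inductionOn g (fun g' =>
        Quot.sound (StrictHom.le_comp_right g' hf))) f
  id_comp f := Quot.inductionOn f fun f' => congrArg (Quot.mk _) (Category.id_comp f')
  comp_id f := Quot.inductionOn f fun f' => congrArg (Quot.mk _) (Category.comp_id f')
  assoc f g h :=
    Quot.inductionOn f fun f' => Quot.inductionOn g fun g' => Quot.inductionOn h fun h' =>
      congrArg (Quot.mk _) (Category.assoc f' g' h')

/-- The quotient functor `∫N^{-,+}(C) → Down_*(C)`. -/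
def qStar (R : ReedyStruct C) : NegObj R ⥤ DownStar R where
  obj P := ⟨P⟩
  map f := Quot.mk _ f
  map_id _ := rfl
  map_comp _ _ := rfl

/-- The inclusion functor `Down(C) → Down_*(C)`. -/
def downInclusion (R : ReedyStruct C) : Down R ⥤ DownStar R where
  obj P := ⟨P.obj.toNegObj⟩
  map {P Q} f :=
    Quot.lift (fun f' : P.obj ⟶ Q.obj => Quot.mk _ f'.1) (fun _ _ h => Quot.sound h) f
  map_id _ := rfl
  map_comp {P Q S} f g := by
    induction f using Quot.ind
    induction g using Quot.ind
    rfl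

/-- The last-component functor `∫N(C) → C`. -/
def lastChain : ChainObj C ⥤ C where
  obj P := P.X.obj (Fin.last P.n)
  map {P Q} f := f.θ (Fin.last P.n) ≫ Q.X.map (homOfLE (Fin.le_last (f.α (Fin.last P.n))))
  map_id P := by
    show 𝟙 (P.X.obj (Fin.last P.n)) ≫ P.X.map (homOfLE (Fin.le_last (Fin.last P.n))) = 𝟙 _
    rw [Category.id_comp]
    exact P.X.map_id _
  map_comp {P Q S} f g := by
    show (f.θ (Fin.last P.n) ≫ g.θ (f.α (Fin.last P.n))) ≫
        S.X.map (homOfLE (Fin.le_last (g.α (f.α (Fin.last P.n))))) =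
      (f.θ (Fin.last P.n) ≫ Q.X.map (homOfLE (Fin.le_last (f.α (Fin.last P.n))))) ≫
        g.θ (Fin.last Q.n) ≫ S.X.map (homOfLE (Fin.le_last (g.α (Fin.last Q.n))))
    rw [Category.assoc, Category.assoc, ← Category.assoc (Q.X.map _),
      g.natural (Fin.le_last (f.α (Fin.last P.n))), Category.assoc, ← Functor.map_comp,
      homOfLE_comp]

theorem lastChain_eq_of_le {P Q : ChainObj C} {f g : P ⟶ Q} (h : ChainHom.le f g) :
    lastChain.map f = lastChain.map g := by
  show f.θ (Fin.last P.n) ≫ Q.X.map (homOfLE (Fin.le_last (f.α (Fin.last P.n)))) =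
    g.θ (Fin.last P.n) ≫ Q.X.map (homOfLE (Fin.le_last (g.α (Fin.last P.n))))
  rw [h.2 (Fin.last P.n) (h.1 (Fin.last P.n)), Category.assoc, ← Functor.map_comp,
    homOfLE_comp]

/-- The forgetful functor `∫N^{-,+}(C) → ∫N(C)`. -/
def negForget (R : ReedyStruct C) : NegObj R ⥤ ChainObj C where
  obj P := P.chain
  map f := f.1
  map_id _ := rfl
  map_comp _ _ := rfl

/-- The last-component functor `∫N^{-,+}(C) → C`. -/
def lastNeg (R : ReedyStruct C) : NegObj R ⥤ C := negForget R ⋙ lastChain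

/-- The forgetful functor `∫N^{--,+}_+(C) → ∫N^{-,+}(C)`. -/
def strictForget (R : ReedyStruct C) : StrictObj R ⥤ NegObj R where
  obj P := P.toNegObj
  map f := f.1
  map_id _ := rfl
  map_comp _ _ := rfl

/-- The last-component functor `∫N^{--,+}_+(C) → C`. -/
def lastStrict (R : ReedyStruct C) : StrictObj R ⥤ C := strictForget R ⋙ lastNeg R

/-- The last-component functor `Down_*(C) → C`. -/
def lastDownStar (R : ReedyStruct C) : DownStar R ⥤ C where
  obj P := (lastNeg R).obj P.obj
  map {P Q} f :=
    Quot.lift (fun f' : P.obj ⟶ Q.obj => (lastNeg R).map f')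
      (fun _ _ h => lastChain_eq_of_le h) f
  map_id P := (lastNeg R).map_id P.obj
  map_comp {P Q S} f g := by
    induction f using Quot.ind
    induction g using Quot.ind
    exact (lastNeg R).map_comp _ _

/-- The last-component functor `Down(C) → C`. -/
def lastDown (R : ReedyStruct C) : Down R ⥤ C where
  obj P := (lastStrict R).obj P.obj
  map {P Q} f :=
    Quot.lift (fun f' : P.obj ⟶ Q.obj => (lastStrict R).map f')
      (fun _ _ h => lastChain_eq_of_le h) f
  map_id P := (lastStrict R).map_id P.obj
  map_comp {P Q S} f g := by
    induction f using Quot.ind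
    induction g using Quot.ind
    exact (lastStrict R).map_comp _ _

/-- The wide subcategory `Γ₋` of `∫N^{-,+}(C)`: morphisms of the form
`(σ, id) : ([m], X ∘ σ) → ([n], X)` with `σ` surjective, i.e. morphisms whose simplicial
component is surjective and all of whose components are identities. -/
def GammaNeg (R : ReedyStruct C) {P Q : NegObj R} (f : P ⟶ Q) : Prop :=
  Function.Surjective f.1.α ∧ ∀ i, IsIdMor (f.1.θ i)

/-- The wide subcategory `Γ₊` of `∫N^{-,+}(C)`: morphisms `(δ, θ)` with `δ` injective. -/
def GammaPos (R : ReedyStruct C) {P Q : NegObj R} (f : P ⟶ Q) : Prop :=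
  Function.Injective f.1.α

/-- Whiskering (precomposition) with `lastF` is bijective on natural transformations
between functors out of `C`. -/
def WhiskerUnique {Γ : Type u₁} [Category.{v₁} Γ] (lastF : Γ ⥤ C) : Prop :=
  ∀ {D : Type u₂} [Category.{v₂} D] (F G : C ⥤ D)
    (ε : lastF ⋙ F ⟶ lastF ⋙ G), ∃! ε' : F ⟶ G, Functor.whiskerLeft lastF ε' = ε

/-- `lastF : Γ ⥤ C` is a weak 1-localization of `Γ` at the `last`-weak equivalences
(the morphisms sent by `lastF` to identities). -/
def IsWeakLocalizationAtLastWeq {Γ : Type u₁} [Category.{v₁} Γ] (lastF : Γ ⥤ C) : Prop :=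
  (∀ {P Q : Γ} (f : P ⟶ Q), IsIdMor (lastF.map f) → IsIso (lastF.map f)) ∧
  (∀ {E : Type u₂} [Category.{v₂} E] (G : Γ ⥤ E),
    (∀ {P Q : Γ} (f : P ⟶ Q), IsIdMor (lastF.map f) → IsIso (G.map f)) →
    ∃ H : C ⥤ E, Nonempty (lastF ⋙ H ≅ G)) ∧
  (∀ {E : Type u₂} [Category.{v₂} E] (H H' : C ⥤ E) (θ : lastF ⋙ H ≅ lastF ⋙ H'),
    ∃! θ' : H ≅ H', Functor.isoWhiskerLeft lastF θ' = θ)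

/-!
Every object `P = ([n], X)` receives the inclusion of its last vertex `([0], X(n)) → P`, which
`last` sends to an identity; so `ε` is determined by its components at one-vertex chains and
`ε̃_c := ε_{([0], c)}` is forced. On `∫N^{--,+}_+(C)` this candidate is natural at `C₊`-morphisms,
which are morphisms between one-vertex chains, and at a non-identity `C₋`-morphism `g : c → z`,
because the two-vertex chain `[g]` receives `([0], c)` and `([0], z)` with `last`-images `g` and an
identity; the Reedy factorization does the rest. The other categories inherit the property along
functors into them that reach every object by a morphism inverted by `last`: the forgetful functor
`∫N^{--,+}_+(C) → ∫N^{-,+}(C)`, the quotient functors onto `Down(C)` and `Down_*(C)`, and the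
section `c ↦ ([0], c)` of `last` on `∫N(C)`.
-/

universe w₁ w₂

section WhiskerUnique

variable {Γ : Type w₁} [Category.{w₂} Γ]

theorem whiskerLeft_injective_of_surjective (L : Γ ⥤ C) (hL : ∀ c, ∃ P, L.obj P = c)
    {D : Type u₂} [Category.{v₂} D] {F G : C ⥤ D} :
    Function.Injective (Functor.whiskerLeft L : (F ⟶ G) → _) := by
  intro η η' h
  ext c
  obtain ⟨P, rfl⟩ := hL c
  exact NatTrans.congr_app h P

theorem naturality_of_map_eq {L : Γ ⥤ C} {D : Type u₂} [Category.{v₂} D] {F G : C ⥤ D}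
    (ε : L ⋙ F ⟶ L ⋙ G) {P Q : Γ} (a : P ⟶ Q) {f : L.obj P ⟶ L.obj Q} (e : L.map a = f) :
    F.map f ≫ ε.app Q = ε.app P ≫ G.map f := by
  subst e
  exact ε.naturality a

theorem whiskerUnique_id : WhiskerUnique.{v₂, u₂} (𝟭 C) :=
  fun _ _ ε => ⟨ε, rfl, fun _ h => h⟩

theorem WhiskerUnique.of_comp {Γ' : Type u₁} [Category.{v₁} Γ'] (L : Γ ⥤ Γ') (M : Γ' ⥤ C)
    (h : WhiskerUnique.{v₂, u₂} (L ⋙ M))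
    (hL : ∀ Q : Γ', ∃ (P : Γ) (a : L.obj P ⟶ Q), IsIso (M.map a)) :
    WhiskerUnique.{v₂, u₂} M := by
  intro D _ F G ε
  obtain ⟨ε', hε', huniq⟩ := h F G (Functor.whiskerLeft L ε)
  refine ⟨ε', ?_, fun η hη => huniq η (by rw [← hη]; rfl)⟩
  ext Q
  obtain ⟨P, a, _⟩ := hL Q
  rw [Functor.whiskerLeft_app, ← cancel_epi (F.map (M.map a)), ε'.naturality,
    naturality_of_map_eq ε a rfl]
  exact congrArg (· ≫ G.map (M.map a)) (NatTrans.congr_app hε' P)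

end WhiskerUnique

namespace ChainObj

def single (c : C) : ChainObj C := ⟨0, (Functor.const (Fin 1)).obj c⟩

def singleMap {c c' : C} (f : c ⟶ c') : single c ⟶ single c' where
  α := OrderHom.id
  θ _ := f
  natural _ := (Category.id_comp f).trans (Category.comp_id f).symm

def singleFunctor : C ⥤ ChainObj C where
  obj := single
  map := singleMap
  map_id _ := rfl
  map_comp _ _ := rfl

theorem singleFunctor_comp_lastChain : singleFunctor ⋙ lastChain = 𝟭 C :=
  CategoryTheory.Functor.ext (fun _ => rfl) fun _ _ f => by
    change f ≫ 𝟙 _ = 𝟙 _ ≫ f ≫ 𝟙 _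
    simp

def vertex (P : ChainObj C) (i : Fin (P.n + 1)) : single (P.X.obj i) ⟶ P where
  α := ⟨fun _ => i, monotone_const⟩
  θ _ := 𝟙 _
  natural _ := by
    simp [single]
    rfl

theorem lastChain_map_vertex (P : ChainObj C) (i : Fin (P.n + 1)) :
    lastChain.map (P.vertex i) = P.X.map (homOfLE (Fin.le_last i)) :=
  Category.id_comp _

theorem lastChain_map_vertex_last (P : ChainObj C) :
    lastChain.map (P.vertex (Fin.last P.n)) = 𝟙 _ :=
  (lastChain_map_vertex P _).trans (P.X.map_id _)

theorem isIso_lastChain_map_vertex_last (P : ChainObj C) :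
    IsIso (lastChain.map (P.vertex (Fin.last P.n))) := by
  rw [lastChain_map_vertex_last]
  exact IsIso.id _

end ChainObj

theorem whiskerUnique_lastChain : WhiskerUnique.{v₂, u₂} (lastChain (C := C)) := by
  refine WhiskerUnique.of_comp ChainObj.singleFunctor lastChain ?_
    fun P => ⟨_, P.vertex (Fin.last P.n), P.isIso_lastChain_map_vertex_last⟩
  rw [ChainObj.singleFunctor_comp_lastChain]
  exact whiskerUnique_id

namespace NegObj

def single (R : ReedyStruct C) (c : C) : NegObj R where
  n := 0
  X := (Functor.const (Fin 1)).obj c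
  negMap _ := R.neg_id c

def vertex (P : NegObj R) (i : Fin (P.n + 1)) : single R (P.X.obj i) ⟶ P :=
  ⟨P.chain.vertex i, fun _ => R.pos_id _⟩

theorem isIso_lastNeg_map_vertex_last (P : NegObj R) :
    IsIso ((lastNeg R).map (P.vertex (Fin.last P.n))) :=
  P.chain.isIso_lastChain_map_vertex_last

end NegObj

namespace StrictObj

def single (R : ReedyStruct C) (c : C) : StrictObj R where
  toNegObj := NegObj.single R c
  idRefl _ _ := Subsingleton.elim (α := Fin 1) _ _

def singleMap {c c' : C} (f : c ⟶ c') (hf : R.pos f) : single R c ⟶ single R c' :=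
  ⟨⟨ChainObj.singleMap f, fun _ => hf⟩, fun _ _ _ => Subsingleton.elim (α := Fin 1) _ _⟩

def vertex (P : StrictObj R) (i : Fin (P.toNegObj.n + 1)) :
    single R (P.toNegObj.X.obj i) ⟶ P :=
  ⟨P.toNegObj.vertex i, fun _ _ _ => Subsingleton.elim (α := Fin 1) _ _⟩

theorem lastStrict_map_vertex (P : StrictObj R) (i : Fin (P.toNegObj.n + 1)) :
    (lastStrict R).map (P.vertex i) = P.toNegObj.X.map (homOfLE (Fin.le_last i)) :=
  Category.id_comp _

theorem lastStrict_map_vertex_last (P : StrictObj R) :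
    (lastStrict R).map (P.vertex (Fin.last P.toNegObj.n)) = 𝟙 _ :=
  P.toNegObj.chain.lastChain_map_vertex_last

def arrow {c z : C} (g : c ⟶ z) (hg : R.neg g) (hgid : ¬ IsIdMor g) : StrictObj R where
  toNegObj :=
    { n := 1
      X := ComposableArrows.mk₁ g
      negMap := fun {i j} h => by
        fin_cases i <;> fin_cases j
        exacts [R.neg_id c, hg, by simp at h, R.neg_id z] }
  idRefl {i j} h hid := by
    fin_cases i <;> fin_cases j
    exacts [rfl, absurd hid hgid, by simp at h, rfl]

section

variable {D : Type u₂} [Category.{v₂} D] {F G : C ⥤ D} (ε : lastStrict R ⋙ F ⟶ lastStrict R ⋙ G)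

def appSingle (c : C) : F.obj c ⟶ G.obj c := ε.app (single R c)

theorem appSingle_last (P : StrictObj R) : appSingle ε ((lastStrict R).obj P) = ε.app P := by
  have h : F.map (𝟙 _) ≫ ε.app P = appSingle ε ((lastStrict R).obj P) ≫ G.map (𝟙 _) :=
    naturality_of_map_eq ε _ (lastStrict_map_vertex_last P)
  simpa using h.symm

theorem naturality_appSingle_of_pos {c c' : C} (f : c ⟶ c') (hf : R.pos f) :
    F.map f ≫ appSingle ε c' = appSingle ε c ≫ G.map f :=
  naturality_of_map_eq ε (singleMap f hf) (Category.comp_id f)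

theorem naturality_appSingle_of_neg {c z : C} (g : c ⟶ z) (hg : R.neg g) :
    F.map g ≫ appSingle ε z = appSingle ε c ≫ G.map g := by
  by_cases hid : IsIdMor g
  · obtain ⟨rfl, rfl⟩ := hid
    simp
  have hsource : F.map g ≫ ε.app (arrow g hg hid) = appSingle ε c ≫ G.map g :=
    naturality_of_map_eq ε ((arrow g hg hid).vertex 0) ((lastStrict_map_vertex _ _).trans rfl)
  rw [← appSingle_last ε (arrow g hg hid)] at hsource
  exact hsource

theorem naturality_appSingle {c c' : C} (f : c ⟶ c') :
    F.map f ≫ appSingle ε c' = appSingle ε c ≫ G.map f := by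
  obtain ⟨⟨z, g, h⟩, ⟨hg, hh, hf⟩, -⟩ := R.factor_existsUnique f
  dsimp only at hg hh hf
  subst hf
  rw [F.map_comp, G.map_comp, Category.assoc, naturality_appSingle_of_pos ε h hh,
    reassoc_of% (naturality_appSingle_of_neg ε g hg)]

end

end StrictObj

theorem whiskerUnique_lastStrict (R : ReedyStruct C) :
    WhiskerUnique.{v₂, u₂} (lastStrict R) := by
  intro D _ F G ε
  let ε' : F ⟶ G :=
    { app := StrictObj.appSingle ε
      naturality _ _ f := StrictObj.naturality_appSingle ε f }
  have hε' : Functor.whiskerLeft (lastStrict R) ε' = ε := by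
    ext P
    exact StrictObj.appSingle_last ε P
  exact ⟨ε', hε', fun η hη => whiskerLeft_injective_of_surjective (lastStrict R)
    (fun c => ⟨StrictObj.single R c, rfl⟩) (hη.trans hε'.symm)⟩

theorem whiskerUnique_lastNeg (R : ReedyStruct C) : WhiskerUnique.{v₂, u₂} (lastNeg R) :=
  WhiskerUnique.of_comp (strictForget R) (lastNeg R) (whiskerUnique_lastStrict R)
    fun P => ⟨StrictObj.single R _, P.vertex (Fin.last P.n), P.isIso_lastNeg_map_vertex_last⟩

def qDown (R : ReedyStruct C) : StrictObj R ⥤ Down R where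
  obj P := ⟨P⟩
  map f := Quot.mk _ f

section Statements

variable (R : ReedyStruct C)

theorem statement17 :
    WhiskerUnique (lastChain (C := C)) ∧ WhiskerUnique (lastNeg R) ∧
    WhiskerUnique (lastStrict R) ∧ WhiskerUnique (lastDownStar R) ∧
    WhiskerUnique (lastDown R) :=
  ⟨whiskerUnique_lastChain, whiskerUnique_lastNeg R, whiskerUnique_lastStrict R,
   WhiskerUnique.of_comp (qStar R) (lastDownStar R) (whiskerUnique_lastNeg R)
     fun Q => ⟨Q.obj, 𝟙 Q, (lastDownStar R).map_isIso (𝟙 Q)⟩,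
   WhiskerUnique.of_comp (qDown R) (lastDown R) (whiskerUnique_lastStrict R)
     fun Q => ⟨Q.obj, 𝟙 Q, (lastDown R).map_isIso (𝟙 Q)⟩⟩

end Statements

end ReedyPaper
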